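/- For g(z) = z^2 + z and every natural number j, the polynomial g^{∘j}(z) + 2 has only simple roots, and the polynomial g^{∘n}(z) + 1 has only simple roots. -/

import Mathlib

/-!
The only critical point of `g z = z ^ 2 + z` is `-1/2`, so by the chain rule
`(g^[n+1])' z = (g^[n])' (g z) * (2 z + 1)` a multiple root of `g^[n] - c` forces `c` to be a
point `g^[k] (-1/4)` of the critical orbit. Since `g` maps `[-1/4, 0]` into itself, that orbit
stays in `[-1/4, 0]`, which contains neither `-1` nor `-2`.
-/

open Polynomial

noncomputable def gIter : ℕ → Polynomial ℂ
  | 0 => X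
  | n + 1 => (gIter n).comp (X ^ 2 + X)

lemma eval_gIter_succ (n : ℕ) (z : ℂ) :
    (gIter (n + 1)).eval z = (gIter n).eval (z ^ 2 + z) := by
  simp [gIter, eval_comp]

lemma eval_derivative_gIter_succ (n : ℕ) (z : ℂ) :
    (gIter (n + 1)).derivative.eval z = (gIter n).derivative.eval (z ^ 2 + z) * (2 * z + 1) := by
  simp [gIter, derivative_comp, eval_comp]
  ring

lemma exists_eval_gIter_ofReal_mem_Icc (n : ℕ) {x : ℝ} (hx : x ∈ Set.Icc (-1/4 : ℝ) 0) :
    ∃ y ∈ Set.Icc (-1/4 : ℝ) 0, (gIter n).eval (x : ℂ) = y := by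
  induction n generalizing x with
  | zero => exact ⟨x, hx, by simp [gIter]⟩
  | succ n ih =>
    obtain ⟨hx₁, hx₂⟩ := hx
    obtain ⟨y, hy, hxy⟩ := ih (x := x ^ 2 + x) ⟨by nlinarith, by nlinarith⟩
    exact ⟨y, hy, by rw [eval_gIter_succ, ← hxy]; push_cast; rfl⟩

lemma eval_gIter_neg_quarter_ne {c : ℝ} (hc : c ∉ Set.Icc (-1/4 : ℝ) 0) (k : ℕ) :
    (gIter k).eval (-1/4 : ℂ) ≠ c := by
  obtain ⟨y, hy, hky⟩ := exists_eval_gIter_ofReal_mem_Icc k (x := -1/4) (by norm_num)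
  push_cast at hky
  rw [hky, Ne, Complex.ofReal_inj]
  rintro rfl
  exact hc hy

lemma eval_derivative_gIter_ne_zero {c : ℂ} (hc : ∀ k, (gIter k).eval (-1/4 : ℂ) ≠ c)
    (n : ℕ) {z : ℂ} (hz : (gIter n).eval z = c) : (gIter n).derivative.eval z ≠ 0 := by
  induction n generalizing z with
  | zero => simp [gIter]
  | succ n ih =>
    rw [eval_gIter_succ] at hz
    rw [eval_derivative_gIter_succ]
    refine mul_ne_zero (ih hz) fun hcrit => hc n ?_
    have hz : z = -1/2 := by linear_combination hcrit / 2
    subst hz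
    convert hz using 2
    ring

lemma eval_derivative_gIter_add_C_ne_zero {a : ℝ} (ha : -a ∉ Set.Icc (-1/4 : ℝ) 0) (n : ℕ)
    {z : ℂ} (hz : (gIter n + C (a : ℂ)).eval z = 0) :
    (gIter n + C (a : ℂ)).derivative.eval z ≠ 0 := by
  rw [derivative_add, derivative_C, add_zero]
  refine eval_derivative_gIter_ne_zero (c := ((-a : ℝ) : ℂ)) (eval_gIter_neg_quarter_ne ha) n ?_
  rw [eval_add, eval_C] at hz
  push_cast
  linear_combination hz

theorem stmt8 (j n : ℕ) :
    (∀ z : ℂ, (gIter j + C 2).eval z = 0 →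
        (gIter j + C 2).derivative.eval z ≠ 0) ∧
    (∀ z : ℂ, (gIter n + C 1).eval z = 0 →
        (gIter n + C 1).derivative.eval z ≠ 0) := by
  refine ⟨fun z hz => ?_, fun z hz => ?_⟩
  · exact_mod_cast
      eval_derivative_gIter_add_C_ne_zero (a := 2) (by norm_num) j (by exact_mod_cast hz)
  · exact_mod_cast
      eval_derivative_gIter_add_C_ne_zero (a := 1) (by norm_num) n (by exact_mod_cast hz)
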